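/- (Facet Theorem) Let π be a minimal valid function. Suppose that for every minimal valid function π', E(π) ⊆ E(π') implies π' = π. Then π is a facet. -/

import Mathlib

open scoped BigOperators

noncomputable section

/-- `ℝ^k` with the Euclidean norm. -/
abbrev Vec (k : ℕ) := EuclideanSpace ℝ (Fin k)

/-- The point of `ℝ^k` with the given integer coordinates. -/
def intVec (k : ℕ) (w : Fin k → ℤ) : Vec k := WithLp.toLp 2 (fun i => (w i : ℝ))

/-- A feasible solution of the infinite group relaxation: a finitely supported
`s : ℝ^k → ℕ` with `f + ∑ r, s r • r ∈ ℤ^k`. -/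
def IsFeasible (k : ℕ) (f : Vec k) (s : Vec k →₀ ℕ) : Prop :=
  ∃ w : Fin k → ℤ, f + ∑ r ∈ s.support, (s r : ℝ) • r = intVec k w

/-- A valid function for the infinite group relaxation. -/
def IsValid (k : ℕ) (f : Vec k) (π : Vec k → ℝ) : Prop :=
  (∀ r, 0 ≤ π r) ∧
  ∀ s : Vec k →₀ ℕ, IsFeasible k f s → 1 ≤ ∑ r ∈ s.support, π r * (s r : ℝ)

/-- A minimal valid function: no valid `π' ≠ π` with `π' ≤ π` pointwise. -/
def IsMinimal (k : ℕ) (f : Vec k) (π : Vec k → ℝ) : Prop :=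
  IsValid k f π ∧ ¬ ∃ π' : Vec k → ℝ, IsValid k f π' ∧ π' ≠ π ∧ ∀ r, π' r ≤ π r

/-- `S(θ)`: the feasible solutions satisfying the inequality of `θ` at equality. -/
def Ssol (k : ℕ) (f : Vec k) (θ : Vec k → ℝ) : Set (Vec k →₀ ℕ) :=
  {s | IsFeasible k f s ∧ ∑ r ∈ s.support, θ r * (s r : ℝ) = 1}

/-- A facet. -/
def IsFacet (k : ℕ) (f : Vec k) (π : Vec k → ℝ) : Prop :=
  IsValid k f π ∧
  ∀ π' : Vec k → ℝ, IsValid k f π' → Ssol k f π ⊆ Ssol k f π' → π' = π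

/-- An extreme valid function. -/
def IsExtremeValid (k : ℕ) (f : Vec k) (π : Vec k → ℝ) : Prop :=
  IsValid k f π ∧ ∀ π₁ π₂ : Vec k → ℝ, IsValid k f π₁ → IsValid k f π₂ →
    (∀ r, π r = (1 / 2) * π₁ r + (1 / 2) * π₂ r) → π₁ = π ∧ π₂ = π

/-- `E(θ)`: the pairs where `θ` is additive. -/
def Eadd (k : ℕ) (θ : Vec k → ℝ) : Set (Vec k × Vec k) :=
  {p | θ (p.1 + p.2) = θ p.1 + θ p.2}

/-- `θ` is genuinely `k`-dimensional: it does not factor through a linear map to `ℝ^(k-1)`. -/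
def GenuinelyFullDim (k : ℕ) (θ : Vec k → ℝ) : Prop :=
  ¬ ∃ (φ : Vec (k - 1) → ℝ) (T : Vec k →ₗ[ℝ] Vec (k - 1)), θ = φ ∘ T

/-- The cone generated by a finite family of vectors. -/
def coneOf {k m : ℕ} (v : Fin m → Vec k) : Set (Vec k) :=
  {x | ∃ lam : Fin m → ℝ, (∀ i, 0 ≤ lam i) ∧ x = ∑ i, lam i • v i}

/-- The cone generated by a set of vectors. -/
def coneOfSet {k : ℕ} (Vs : Set (Vec k)) : Set (Vec k) :=
  {x | ∃ (n : ℕ) (v : Fin n → Vec k) (lam : Fin n → ℝ),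
    (∀ i, v i ∈ Vs) ∧ (∀ i, 0 ≤ lam i) ∧ x = ∑ i, lam i • v i}

/-- A polyhedron: an intersection of finitely many closed halfspaces. -/
def IsPolyhedron {k : ℕ} (P : Set (Vec k)) : Prop :=
  ∃ (n : ℕ) (a : Fin n → Vec k) (b : Fin n → ℝ),
    P = {x | ∀ i, (inner ℝ (a i) x : ℝ) ≤ b i}

/-- A face of a polyhedron cut out by a valid inequality. -/
def IsFace {k : ℕ} (F P : Set (Vec k)) : Prop :=
  ∃ (a : Vec k) (b : ℝ), (∀ x ∈ P, (inner ℝ a x : ℝ) ≤ b) ∧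
    F = {x | x ∈ P ∧ (inner ℝ a x : ℝ) = b}

/-- A polyhedral complex in `ℝ^k`. -/
structure PolyhedralComplex (k : ℕ) where
  cells : Set (Set (Vec k))
  poly : ∀ P ∈ cells, IsPolyhedron P
  faces_mem : ∀ P ∈ cells, ∀ F : Set (Vec k), IsFace F P → F ∈ cells
  inter_face : ∀ P ∈ cells, ∀ Q ∈ cells, IsFace (P ∩ Q) P ∧ IsFace (P ∩ Q) Q

/-- A maximal cell of a polyhedral complex. -/
def IsMaximalCell {k : ℕ} (PC : PolyhedralComplex k) (P : Set (Vec k)) : Prop :=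
  P ∈ PC.cells ∧ ∀ Q ∈ PC.cells, P ⊆ Q → Q = P

/-- A pure complex: all maximal cells are full-dimensional. -/
def PolyhedralComplex.Pure {k : ℕ} (PC : PolyhedralComplex k) : Prop :=
  ∀ P : Set (Vec k), IsMaximalCell PC P → (interior P).Nonempty

/-- A complete complex: the union of the cells is all of `ℝ^k`. -/
def PolyhedralComplex.Complete {k : ℕ} (PC : PolyhedralComplex k) : Prop :=
  ⋃₀ PC.cells = Set.univ

/-- A polyhedral fan: finitely many cells, all of which are cones. -/
def IsFan {k : ℕ} (F : PolyhedralComplex k) : Prop :=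
  F.cells.Finite ∧ ∀ C ∈ F.cells, ∀ x ∈ C, ∀ t : ℝ, 0 ≤ t → t • x ∈ C

/-- A locally finite polyhedral complex: near each point it looks like a translated fan. -/
def PolyhedralComplex.LocFinite {k : ℕ} (PC : PolyhedralComplex k) : Prop :=
  ∀ r : Vec k, ∃ ε : ℝ, 0 < ε ∧ ∃ F : PolyhedralComplex k, IsFan F ∧
    {S : Set (Vec k) | ∃ P ∈ PC.cells, S = P ∩ Metric.ball r ε ∧ S.Nonempty} =
    {S : Set (Vec k) | ∃ C ∈ F.cells,
      S = ((fun x => x + r) '' C) ∩ Metric.ball r ε ∧ S.Nonempty}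

/-- `θ` is piecewise linear with cell complex `PC` (pure and complete), the maximal
cell `P` carrying the gradient `grad P`. -/
def IsPWLWith {k : ℕ} (PC : PolyhedralComplex k) (grad : Set (Vec k) → Vec k)
    (θ : Vec k → ℝ) : Prop :=
  PC.Pure ∧ PC.Complete ∧
  ∀ P : Set (Vec k), IsMaximalCell PC P →
    ∃ δ : ℝ, ∀ x ∈ P, θ x = (inner ℝ (grad P) x : ℝ) + δ

/-- The gradient set of a piecewise linear function. -/
def gradSet {k : ℕ} (PC : PolyhedralComplex k) (grad : Set (Vec k) → Vec k) : Set (Vec k) :=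
  {g | ∃ P : Set (Vec k), IsMaximalCell PC P ∧ grad P = g}

/-!
Minimal valid functions are the valid functions with `π r + π (-f - r) = 1` for all `r`. The
nontrivial direction comes from lowering single values of `π`, which minimality forbids; this
first gives subadditivity and `ℤ^k`-periodicity, and with them the symmetry condition.

If `π'` is valid and `S(π) ⊆ S(π')`, then the pairs `{r, -f - r}` lie in `S(π)` and so in
`S(π')`, hence `π'` is symmetric and thus minimal. For `(u, v) ∈ E(π)` the triple
`{u, v, -f - u - v}` lies in `S(π)`, so comparing it with the pair `{u + v, -f - u - v}` gives
`(u, v) ∈ E(π')`. The hypothesis then forces `π' = π`.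
-/

open Finsupp

section weight

variable {σ M : Type*} [AddCommMonoid M]

lemma sum_mul_eq_weight (θ : σ → ℝ) (s : σ →₀ ℕ) :
    ∑ r ∈ s.support, θ r * (s r : ℝ) = s.weight θ := by
  simp only [weight_apply, Finsupp.sum, nsmul_eq_mul, mul_comm]

lemma sum_smul_eq_weight_id {E : Type*} [AddCommMonoid E] [Module ℝ E] (s : E →₀ ℕ) :
    ∑ r ∈ s.support, (s r : ℝ) • r = s.weight id := by
  simp only [weight_apply, Finsupp.sum, Nat.cast_smul_eq_nsmul, id]

lemma weight_eq_weight_erase_add (θ : σ → M) (s : σ →₀ ℕ) (z : σ) :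
    s.weight θ = (s.erase z).weight θ + s z • θ z := by
  conv_lhs => rw [← erase_add_single z s]
  rw [map_add, weight_single]

lemma weight_update [DecidableEq σ] (θ : σ → M) (s : σ →₀ ℕ) (z : σ) (c : M) :
    s.weight (Function.update θ z c) = (s.erase z).weight θ + s z • c := by
  rw [weight_eq_weight_erase_add _ s z, Function.update_self, weight_apply, weight_apply]
  congr 1
  refine Finset.sum_congr rfl fun r hr => ?_
  rw [support_erase] at hr
  simp only [Function.update_of_ne (Finset.ne_of_mem_erase hr)]

lemma weight_nonneg {θ : σ → ℝ} (hθ : ∀ r, 0 ≤ θ r) (s : σ →₀ ℕ) : 0 ≤ s.weight θ :=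
  Finset.sum_nonneg fun r _ => nsmul_nonneg (hθ r) _

lemma apply_weight_id_le_weight {θ : M → ℝ} (h0 : θ 0 = 0)
    (hsub : ∀ x y, θ (x + y) ≤ θ x + θ y) (s : M →₀ ℕ) : θ (s.weight id) ≤ s.weight θ := by
  have hnsmul (n : ℕ) (x : M) : θ (n • x) ≤ n • θ x := by
    simpa using Finset.le_sum_of_subadditive θ h0.le hsub (Finset.range n) fun _ => x
  calc θ (s.weight id) = θ (∑ r ∈ s.support, s r • r) := rfl
    _ ≤ ∑ r ∈ s.support, θ (s r • r) := Finset.le_sum_of_subadditive θ h0.le hsub _ _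
    _ ≤ s.weight θ := Finset.sum_le_sum fun r _ => hnsmul (s r) r

end weight

def intLattice (k : ℕ) : AddSubgroup (Vec k) :=
  (AddMonoidHom.mk' (intVec k) fun v w => by ext i; simp [intVec]).range

lemma isFeasible_iff {k : ℕ} {f : Vec k} {s : Vec k →₀ ℕ} :
    IsFeasible k f s ↔ f + s.weight id ∈ intLattice k := by
  simp only [IsFeasible, intLattice, AddMonoidHom.mem_range, AddMonoidHom.mk'_apply,
    sum_smul_eq_weight_id, eq_comm]

lemma mem_Ssol_iff {k : ℕ} {f : Vec k} {θ : Vec k → ℝ} {s : Vec k →₀ ℕ} :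
    s ∈ Ssol k f θ ↔ IsFeasible k f s ∧ s.weight θ = 1 := by
  rw [← sum_mul_eq_weight]
  rfl

lemma IsValid.one_le_weight {k : ℕ} {f : Vec k} {θ : Vec k → ℝ} (h : IsValid k f θ)
    {s : Vec k →₀ ℕ} (hs : IsFeasible k f s) : 1 ≤ s.weight θ := by
  simpa only [sum_mul_eq_weight] using h.2 s hs

lemma isFeasible_pair {k : ℕ} (f r : Vec k) : IsFeasible k f (single r 1 + single (-f - r) 1) := by
  simp [isFeasible_iff, weight_single, zero_mem]

lemma pair_mem_Ssol_iff {k : ℕ} {f : Vec k} {θ : Vec k → ℝ} (r : Vec k) :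
    single r 1 + single (-f - r) 1 ∈ Ssol k f θ ↔ θ r + θ (-f - r) = 1 := by
  simp only [mem_Ssol_iff, isFeasible_pair, true_and, map_add, weight_single, one_smul]

lemma isFeasible_triple {k : ℕ} (f u v : Vec k) :
    IsFeasible k f (single u 1 + single v 1 + single (-f - (u + v)) 1) := by
  simp only [isFeasible_iff, map_add, weight_single, one_smul, id]
  rw [show f + (u + v + (-f - (u + v))) = 0 by abel]
  exact zero_mem _

lemma triple_mem_Ssol_iff {k : ℕ} {f : Vec k} {θ : Vec k → ℝ} (u v : Vec k) :
    single u 1 + single v 1 + single (-f - (u + v)) 1 ∈ Ssol k f θ ↔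
      θ u + θ v + θ (-f - (u + v)) = 1 := by
  simp only [mem_Ssol_iff, isFeasible_triple, true_and, map_add, weight_single, one_smul]

namespace IsMinimal

variable {k : ℕ} {f : Vec k} {π : Vec k → ℝ}

lemma nonneg (hmin : IsMinimal k f π) (r : Vec k) : 0 ≤ π r := hmin.1.1 r

/-- `hbound` says that lowering the value of `π` at `z` to `c` keeps it valid. -/
lemma le_of_forall_feasible (hmin : IsMinimal k f π) {z : Vec k} {c : ℝ} (hc : 0 ≤ c)
    (hbound : ∀ s, IsFeasible k f s → 1 ≤ (s.erase z).weight π + s z * c) : π z ≤ c := by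
  by_contra! hlt
  refine hmin.2 ⟨Function.update π z c, ⟨fun r => ?_, fun s hs => ?_⟩, fun heq => ?_, fun r => ?_⟩
  · rw [Function.update_apply]
    split_ifs
    exacts [hc, hmin.nonneg r]
  · simpa [sum_mul_eq_weight, weight_update] using hbound s hs
  · exact hlt.ne (by simpa using congrFun heq z)
  · rw [Function.update_apply]
    split_ifs with hr
    exacts [hr ▸ hlt.le, le_rfl]

lemma apply_eq_zero_of_mem (hmin : IsMinimal k f π) {z : Vec k} (hz : z ∈ intLattice k) :
    π z = 0 := by
  refine le_antisymm (hmin.le_of_forall_feasible le_rfl fun s hs => ?_) (hmin.nonneg z)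
  suffices IsFeasible k f (s.erase z) by simpa using hmin.1.one_le_weight this
  rw [isFeasible_iff] at hs ⊢
  have hs' : f + (s.erase z).weight id + s z • z ∈ intLattice k := by
    rwa [weight_eq_weight_erase_add id s z, ← add_assoc] at hs
  simpa using sub_mem hs' (nsmul_mem hz (s z))

lemma apply_zero (hmin : IsMinimal k f π) : π 0 = 0 :=
  hmin.apply_eq_zero_of_mem (zero_mem _)

lemma apply_add_le (hmin : IsMinimal k f π) (u v : Vec k) : π (u + v) ≤ π u + π v := by
  refine hmin.le_of_forall_feasible (add_nonneg (hmin.nonneg u) (hmin.nonneg v)) fun s hs => ?_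
  -- split each copy of `u + v` into a copy of `u` and one of `v`
  set e := s.erase (u + v) + single u (s (u + v)) + single v (s (u + v))
  have he : IsFeasible k f e := by
    rw [isFeasible_iff] at hs ⊢
    convert hs using 2
    rw [weight_eq_weight_erase_add id s (u + v)]
    simp [e, weight_single, add_assoc]
  have := hmin.1.one_le_weight he
  simp only [e, map_add, weight_single, nsmul_eq_mul] at this
  linarith

lemma apply_add_of_mem (hmin : IsMinimal k f π) (x : Vec k) {z : Vec k}
    (hz : z ∈ intLattice k) : π (x + z) = π x := by
  have h1 := hmin.apply_add_le x z
  have h2 := hmin.apply_add_le (x + z) (-z)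
  rw [hmin.apply_eq_zero_of_mem hz] at h1
  rw [hmin.apply_eq_zero_of_mem (neg_mem hz), add_neg_cancel_right] at h2
  linarith

lemma apply_le_one (hmin : IsMinimal k f π) (r : Vec k) : π r ≤ 1 := by
  refine hmin.le_of_forall_feasible zero_le_one fun s hs => ?_
  have hW := weight_nonneg hmin.nonneg (s.erase r)
  rcases Nat.eq_zero_or_pos (s r) with h0 | hpos
  · have := hmin.1.one_le_weight hs
    rw [weight_eq_weight_erase_add π s r, h0] at this
    simpa [h0] using this
  · have : (1 : ℝ) ≤ s r := by exact_mod_cast hpos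
    linarith

/-- Removing one copy of `r` from `s` leaves a representation of `-f - r` modulo `ℤ^k`. -/
lemma apply_add_apply_neg_sub_le_weight (hmin : IsMinimal k f π) {s : Vec k →₀ ℕ}
    (hs : IsFeasible k f s) {r : Vec k} (hr : s r ≠ 0) :
    π r + π (-f - r) ≤ s.weight π := by
  set t := s - single r 1
  have ht : t.weight id = -f - r + (f + s.weight id) := by
    rw [← weight_sub_single_add hr]; simp only [id]; abel
  have hsub := apply_weight_id_le_weight hmin.apply_zero hmin.apply_add_le t
  rw [ht, hmin.apply_add_of_mem _ (isFeasible_iff.1 hs)] at hsub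
  rw [← weight_sub_single_add hr]
  linarith

/-- If `π r + π (-f - r) = 1 + δ` with `δ > 0`, then `π r` can be lowered by a small `ε`:
solutions using `r` at most `δ / ε` times keep enough slack, and those using it more often
already pay more than `1` for the copies of `r`. -/
lemma apply_add_apply_neg_sub (hmin : IsMinimal k f π) (r : Vec k) : π r + π (-f - r) = 1 := by
  have hge : 1 ≤ π r + π (-f - r) := by
    simpa [weight_single] using hmin.1.one_le_weight (isFeasible_pair f r)
  by_contra hne
  set δ := π r + π (-f - r) - 1
  have hδ : 0 < δ := by
    have := lt_of_le_of_ne hge (Ne.symm hne)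
    linarith
  have hr : 0 < π r := by linarith [hmin.apply_le_one (-f - r)]
  set ε := min (π r / 2) (δ * π r / 2)
  have hε : 0 < ε := lt_min (by linarith) (by positivity)
  have hε₁ : ε ≤ π r / 2 := min_le_left _ _
  have hε₂ : ε ≤ δ * π r / 2 := min_le_right _ _
  suffices π r ≤ π r - ε by linarith
  refine hmin.le_of_forall_feasible (by linarith) fun s hs => ?_
  have hW := weight_eq_weight_erase_add π s r
  have hWnn := weight_nonneg hmin.nonneg (s.erase r)
  rw [nsmul_eq_mul] at hW
  rcases eq_or_ne (s r) 0 with h0 | hs0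
  · have := hmin.1.one_le_weight hs
    rw [h0] at hW ⊢
    simp only [Nat.cast_zero, zero_mul, add_zero] at hW ⊢
    linarith
  have hslack := hmin.apply_add_apply_neg_sub_le_weight hs hs0
  have hm : (0 : ℝ) ≤ s r := Nat.cast_nonneg _
  rcases le_or_gt (s r * ε) δ with hsmall | hlarge
  · nlinarith
  · have hmε : s r * ε ≤ s r * (δ * π r / 2) := mul_le_mul_of_nonneg_left hε₂ hm
    have hmany : 1 < s r * (π r / 2) := by
      by_contra! hfew
      nlinarith
    have : s r * (π r / 2) ≤ s r * (π r - ε) := mul_le_mul_of_nonneg_left (by linarith) hm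
    linarith

end IsMinimal

lemma IsValid.isMinimal_of_add_apply_neg_sub {k : ℕ} {f : Vec k} {θ : Vec k → ℝ}
    (hval : IsValid k f θ) (hsym : ∀ r, θ r + θ (-f - r) = 1) : IsMinimal k f θ := by
  refine ⟨hval, fun ⟨ρ, hρ, hne, hle⟩ => hne (funext fun r => le_antisymm (hle r) ?_)⟩
  have := hρ.one_le_weight (isFeasible_pair f r)
  simp only [map_add, weight_single, one_smul] at this
  linarith [hle (-f - r), hsym r]

theorem statement4_general (k : ℕ) (f : Vec k) (π : Vec k → ℝ)
    (hmin : IsMinimal k f π)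
    (h : ∀ π' : Vec k → ℝ, IsMinimal k f π' → Eadd k π ⊆ Eadd k π' → π' = π) :
    IsFacet k f π := by
  refine ⟨hmin.1, fun π' hval' hS => ?_⟩
  have hpair (r : Vec k) : π' r + π' (-f - r) = 1 :=
    (pair_mem_Ssol_iff r).1 (hS ((pair_mem_Ssol_iff r).2 (hmin.apply_add_apply_neg_sub r)))
  refine h π' (hval'.isMinimal_of_add_apply_neg_sub hpair) fun ⟨u, v⟩ huv => ?_
  have hπ : π u + π v + π (-f - (u + v)) = 1 := by
    rw [← show π (u + v) = π u + π v from huv]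
    exact hmin.apply_add_apply_neg_sub (u + v)
  have htriple := (triple_mem_Ssol_iff u v).1 (hS ((triple_mem_Ssol_iff u v).2 hπ))
  change π' (u + v) = π' u + π' v
  linarith [hpair (u + v)]

/-- Facet Theorem: if every minimal valid function `π'` with `E(π) ⊆ E(π')` equals `π`,
then `π` is a facet. -/
theorem statement4 (k : ℕ) (hk : 1 ≤ k) (f : Vec k) (π : Vec k → ℝ)
    (hmin : IsMinimal k f π)
    (h : ∀ π' : Vec k → ℝ, IsMinimal k f π' → Eadd k π ⊆ Eadd k π' → π' = π) :
    IsFacet k f π :=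
  statement4_general k f π hmin h
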